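/- If 2β ∈ ℤ_{≥0}, then the map τ: ℂ[s,t] → ℂ[s,t] given by τ(g(s,t)) = g(s,t)·∏_{n=0}^{2β}(t/2 + β − n) is an injective homomorphism of 𝔏-modules from Θ(λ, α, −β−1, γ) onto the proper submodule V = ℂ[s,t]·∏_{n=0}^{2β}(t/2 + β − n) of Θ(λ, α, β, γ); in particular Θ(λ, α, β, γ) is not simple when 2β ∈ ℤ_{≥0}. -/

import Mathlib

open MvPolynomial

abbrev R2 : Type := MvPolynomial (Fin 2) ℂ

/-- Substitution `g(s,t) ↦ g(s - u, t + v)`. -/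
noncomputable def sh (u v : ℂ) : R2 →ₐ[ℂ] R2 := aeval ![X 0 - C u, X 1 + C v]

/-- Action of `e_i` in `Θ(λ,α,β,γ)`. -/
noncomputable def thE (lam a b : ℂ) (i : ℤ) (g : R2) : R2 :=
  C (lam ^ i * a) * (C 2⁻¹ * X 1 + C b) * sh (i : ℂ) (-2) g

/-- Action of `f_i` in `Θ(λ,α,β,γ)`. -/
noncomputable def thF (lam a b : ℂ) (i : ℤ) (g : R2) : R2 :=
  C (-(lam ^ i / a)) * (C 2⁻¹ * X 1 - C b) * sh (i : ℂ) 2 g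

/-- Action of `h_i`. -/
noncomputable def opH (lam : ℂ) (i : ℤ) (g : R2) : R2 :=
  C (lam ^ i) * X 1 * sh (i : ℂ) 0 g

/-- Action of `d_i`. -/
noncomputable def opD (lam c : ℂ) (i : ℤ) (g : R2) : R2 :=
  C (lam ^ i) * (X 0 + C ((i : ℂ) * c)) * sh (i : ℂ) 0 g

/-!
Write `P_b = ∏_{n=0}^{N} (t/2 + b - n)`. Shifting `t ↦ t ∓ 2` moves the product to `P_{b ∓ 1}`, and
telescoping gives `(t/2 + b - N - 1) P_b = (t/2 + b) P_{b-1}`. When `N = 2b` the extra factor on the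
left is `t/2 + (-b - 1)`, the factor of `e_i` in `Θ(λ,α,-β-1,γ)`; this is exactly the intertwining
relation for `e_i`, and the same identity at `b + 1` gives it for `f_i`. The operators `h_i`, `d_i`
do not shift `t`, so they commute with multiplication by `P_b`. Hence `V = (P_b)` is a submodule,
nonzero because `ℂ[s,t]` is a domain, and proper because `P_b` vanishes at `t = -2b`.
-/

lemma apply_mem_span_singleton_of_intertwines {R : Type*} [CommSemiring R] {P : R}
    {φ ψ : R → R} (h : ∀ g, ψ g * P = φ (g * P)) {g : R} (hg : g ∈ Ideal.span {P}) :
    φ g ∈ Ideal.span {P} := by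
  obtain ⟨q, rfl⟩ := Ideal.mem_span_singleton'.mp hg
  rw [← h]
  exact Ideal.mul_mem_left _ _ (Ideal.mem_span_singleton_self P)

noncomputable def halfTAdd (x : ℂ) : R2 := C 2⁻¹ * X 1 + C x

noncomputable def halfTProd (b : ℂ) (N : ℕ) : R2 := ∏ n ∈ Finset.range (N + 1), halfTAdd (b - n)

lemma halfT_sub_C_eq_halfTAdd (x : ℂ) : C 2⁻¹ * X 1 - C x = halfTAdd (-x) := by
  rw [halfTAdd, C_neg, sub_eq_add_neg]

lemma sh_halfTAdd (u v x : ℂ) : sh u v (halfTAdd x) = halfTAdd (x + v / 2) := by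
  simp only [halfTAdd, sh, map_add, map_mul, aeval_C, aeval_X, algebraMap_eq, Fin.isValue,
    Matrix.cons_val_one, Matrix.cons_val_zero, div_eq_mul_inv]
  ring

lemma sh_halfTProd (u v b : ℂ) (N : ℕ) : sh u v (halfTProd b N) = halfTProd (b + v / 2) N := by
  rw [halfTProd, halfTProd, map_prod]
  exact Finset.prod_congr rfl fun n _ => by rw [sh_halfTAdd, sub_add_eq_add_sub]

lemma eval_halfTAdd (s t x : ℂ) : eval ![s, t] (halfTAdd x) = t / 2 + x := by
  simp [halfTAdd, div_eq_inv_mul]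

lemma halfTAdd_ne_zero (x : ℂ) : halfTAdd x ≠ 0 := fun h => by
  have h1 := congrArg (eval ![0, 2 * (1 - x)]) h
  rw [eval_halfTAdd, map_zero] at h1
  exact one_ne_zero (by linear_combination h1)

lemma not_isUnit_halfTAdd (x : ℂ) : ¬ IsUnit (halfTAdd x) := fun h => by
  have h0 := h.map (eval ![0, -2 * x])
  rw [eval_halfTAdd, show -2 * x / 2 + x = 0 by ring] at h0
  exact not_isUnit_zero h0

lemma halfTProd_ne_zero (b : ℂ) (N : ℕ) : halfTProd b N ≠ 0 :=
  Finset.prod_ne_zero_iff.mpr fun _ _ => halfTAdd_ne_zero _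

lemma not_isUnit_halfTProd (b : ℂ) (N : ℕ) : ¬ IsUnit (halfTProd b N) := by
  have hdvd : halfTAdd b ∣ halfTProd b N := by
    simpa [halfTProd] using
      Finset.dvd_prod_of_mem (fun n : ℕ => halfTAdd (b - n)) (Finset.mem_range.mpr N.succ_pos)
  exact fun h => not_isUnit_halfTAdd b (isUnit_of_dvd_unit hdvd h)

lemma halfTAdd_mul_halfTProd (b : ℂ) (N : ℕ) :
    halfTAdd (b - (N + 1)) * halfTProd b N = halfTAdd b * halfTProd (b - 1) N := by
  have h := (Finset.prod_range_succ (fun n : ℕ => halfTAdd (b - n)) (N + 1)).symm.trans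
    (Finset.prod_range_succ' (fun n : ℕ => halfTAdd (b - n)) (N + 1))
  rw [mul_comm] at h
  simpa only [halfTProd, Nat.cast_add, Nat.cast_one, Nat.cast_zero, sub_zero, sub_add_eq_sub_sub,
    sub_right_comm _ (1 : ℂ), mul_comm (halfTAdd b)] using h

lemma sh_zero_halfTProd (u b : ℂ) (N : ℕ) : sh u 0 (halfTProd b N) = halfTProd b N := by
  rw [sh_halfTProd, zero_div, add_zero]

lemma thE_eq (lam a b : ℂ) (i : ℤ) (g : R2) :
    thE lam a b i g = C (lam ^ i * a) * halfTAdd b * sh (i : ℂ) (-2) g := rfl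

lemma thF_eq (lam a b : ℂ) (i : ℤ) (g : R2) :
    thF lam a b i g = C (-(lam ^ i / a)) * halfTAdd (-b) * sh (i : ℂ) 2 g := by
  rw [thF, halfT_sub_C_eq_halfTAdd]

section Intertwining

variable {b : ℂ} {N : ℕ}

lemma halfTAdd_neg_sub_one_mul_halfTProd (hN : (N : ℂ) = 2 * b) (u : ℂ) :
    halfTAdd (-b - 1) * halfTProd b N = halfTAdd b * sh u (-2) (halfTProd b N) := by
  rw [sh_halfTProd, show b + -2 / 2 = b - 1 by ring, ← halfTAdd_mul_halfTProd, hN]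
  congr 2
  ring

lemma halfTAdd_neg_mul_sh_halfTProd (hN : (N : ℂ) = 2 * b) (u : ℂ) :
    halfTAdd (-b) * sh u 2 (halfTProd b N) = halfTAdd (b + 1) * halfTProd b N := by
  have h := halfTAdd_mul_halfTProd (b + 1) N
  rw [add_sub_cancel_right] at h
  rw [sh_halfTProd, show b + 2 / 2 = b + 1 by ring, ← h, hN]
  congr 2
  ring

lemma thE_mul_halfTProd (hN : (N : ℂ) = 2 * b) (lam a : ℂ) (i : ℤ) (g : R2) :
    thE lam a (-b - 1) i g * halfTProd b N = thE lam a b i (g * halfTProd b N) := by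
  rw [thE_eq, thE_eq, map_mul (sh (i : ℂ) (-2))]
  linear_combination (C (lam ^ i * a) * sh (i : ℂ) (-2) g) *
    halfTAdd_neg_sub_one_mul_halfTProd hN (i : ℂ)

lemma thF_mul_halfTProd (hN : (N : ℂ) = 2 * b) (lam a : ℂ) (i : ℤ) (g : R2) :
    thF lam a (-b - 1) i g * halfTProd b N = thF lam a b i (g * halfTProd b N) := by
  rw [thF_eq, thF_eq, show -(-b - 1) = b + 1 by ring, map_mul (sh (i : ℂ) 2)]
  linear_combination (C (-(lam ^ i / a)) * sh (i : ℂ) 2 g) *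
    (halfTAdd_neg_mul_sh_halfTProd hN (i : ℂ)).symm

lemma opH_mul_halfTProd (lam : ℂ) (i : ℤ) (g : R2) :
    opH lam i g * halfTProd b N = opH lam i (g * halfTProd b N) := by
  rw [opH, opH, map_mul (sh (i : ℂ) 0), sh_zero_halfTProd]
  ring

lemma opD_mul_halfTProd (lam c : ℂ) (i : ℤ) (g : R2) :
    opD lam c i g * halfTProd b N = opD lam c i (g * halfTProd b N) := by
  rw [opD, opD, map_mul (sh (i : ℂ) 0), sh_zero_halfTProd]
  ring

end Intertwining

theorem stmt19_general (lam a : ℂ) (b c : ℂ)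
    (N : ℕ) (hN : (N : ℂ) = 2 * b)
    (P : R2) (hP : P = ∏ n ∈ Finset.range (N + 1), (C 2⁻¹ * X 1 + C (b - (n : ℂ))))
    (τ : R2 → R2) (hτ : ∀ g : R2, τ g = g * P) :
    Function.Injective τ ∧
    (∀ (i : ℤ) (g : R2), τ (thE lam a (-b - 1) i g) = thE lam a b i (τ g)) ∧
    (∀ (i : ℤ) (g : R2), τ (thF lam a (-b - 1) i g) = thF lam a b i (τ g)) ∧
    (∀ (i : ℤ) (g : R2), τ (opH lam i g) = opH lam i (τ g)) ∧
    (∀ (i : ℤ) (g : R2), τ (opD lam c i g) = opD lam c i (τ g)) ∧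
    Set.range τ = (Ideal.span {P} : Ideal R2) ∧
    (Ideal.span {P} : Ideal R2) ≠ ⊤ ∧
    (Ideal.span {P} : Ideal R2) ≠ ⊥ ∧
    (∀ i : ℤ, ∀ g ∈ (Ideal.span {P} : Ideal R2), thE lam a b i g ∈ Ideal.span {P}) ∧
    (∀ i : ℤ, ∀ g ∈ (Ideal.span {P} : Ideal R2), thF lam a b i g ∈ Ideal.span {P}) ∧
    (∀ i : ℤ, ∀ g ∈ (Ideal.span {P} : Ideal R2), opH lam i g ∈ Ideal.span {P}) ∧
    (∀ i : ℤ, ∀ g ∈ (Ideal.span {P} : Ideal R2), opD lam c i g ∈ Ideal.span {P}) := by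
  obtain rfl : τ = (· * P) := funext hτ
  subst hP
  refine ⟨mul_left_injective₀ (halfTProd_ne_zero b N), thE_mul_halfTProd hN lam a,
    thF_mul_halfTProd hN lam a, opH_mul_halfTProd lam, opD_mul_halfTProd lam c,
    Set.ext fun _ => Ideal.mem_span_singleton'.symm,
    Ideal.span_singleton_eq_top.not.mpr (not_isUnit_halfTProd b N),
    Ideal.span_singleton_eq_bot.not.mpr (halfTProd_ne_zero b N),
    fun i _ => apply_mem_span_singleton_of_intertwines (thE_mul_halfTProd hN lam a i),
    fun i _ => apply_mem_span_singleton_of_intertwines (thF_mul_halfTProd hN lam a i),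
    fun i _ => apply_mem_span_singleton_of_intertwines (opH_mul_halfTProd lam i),
    fun i _ => apply_mem_span_singleton_of_intertwines (opD_mul_halfTProd lam c i)⟩

/-- For 2β ∈ ℤ₊, multiplication by P(t) = ∏_{n=0}^{2β}(t/2 + β − n) is an injective
𝔏-module homomorphism Θ(λ,α,−β−1,γ) → Θ(λ,α,β,γ) with image the proper invariant
submodule V = ℂ[s,t]·P; in particular Θ(λ,α,β,γ) is not simple. -/
theorem stmt19 (lam a : ℂ) (hlam : lam ≠ 0) (ha : a ≠ 0) (b c : ℂ)
    (N : ℕ) (hN : (N : ℂ) = 2 * b)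
    (P : R2) (hP : P = ∏ n ∈ Finset.range (N + 1), (C 2⁻¹ * X 1 + C (b - (n : ℂ))))
    (τ : R2 → R2) (hτ : ∀ g : R2, τ g = g * P) :
    Function.Injective τ ∧
    (∀ (i : ℤ) (g : R2), τ (thE lam a (-b - 1) i g) = thE lam a b i (τ g)) ∧
    (∀ (i : ℤ) (g : R2), τ (thF lam a (-b - 1) i g) = thF lam a b i (τ g)) ∧
    (∀ (i : ℤ) (g : R2), τ (opH lam i g) = opH lam i (τ g)) ∧
    (∀ (i : ℤ) (g : R2), τ (opD lam c i g) = opD lam c i (τ g)) ∧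
    Set.range τ = (Ideal.span {P} : Ideal R2) ∧
    (Ideal.span {P} : Ideal R2) ≠ ⊤ ∧
    (Ideal.span {P} : Ideal R2) ≠ ⊥ ∧
    (∀ i : ℤ, ∀ g ∈ (Ideal.span {P} : Ideal R2), thE lam a b i g ∈ Ideal.span {P}) ∧
    (∀ i : ℤ, ∀ g ∈ (Ideal.span {P} : Ideal R2), thF lam a b i g ∈ Ideal.span {P}) ∧
    (∀ i : ℤ, ∀ g ∈ (Ideal.span {P} : Ideal R2), opH lam i g ∈ Ideal.span {P}) ∧
    (∀ i : ℤ, ∀ g ∈ (Ideal.span {P} : Ideal R2), opD lam c i g ∈ Ideal.span {P}) :=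
  stmt19_general lam a b c N hN P hP τ hτ
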